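/- Fix b > 0. For ε ∈ (0, 1/(12b²)) the function p_ε(z) = z − 4εz³ (the derivative of l_ε(z) = z²/2 − εz⁴) is strictly increasing on [0,b]; let h_ε : [0, p_ε(b)] → [0,b] denote its inverse, and set A_ε(z) = 1/h_ε'(z), B_ε(z) = z/h_ε(z), α_ε(z) = (z²·A_ε''(z) + 6(A_ε(z) − B_ε(z)) − 4z(A_ε'(z) − B_ε'(z)))/z², β_ε(z) = (z·A_ε'(z) − 2(A_ε(z) − B_ε(z)))/z², γ_ε(z) = B_ε''(z), δ_ε(z) = B_ε'(z)/z. Then there exists ε₀ ∈ (0, 1/(12b²)) such that for every ε ∈ (0, ε₀) and every z ∈ (0, p_ε(b)]: β_ε(z) < 0, γ_ε(z) < 0, δ_ε(z) < 0, and α_ε(z) + δ_ε(z) < 2√(β_ε(z)·γ_ε(z)). -/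

import Mathlib

/-- `α(z)` built from `A, B` using one-sided (within `S`) derivatives. -/
noncomputable def mtwAlphaW (S : Set ℝ) (A B : ℝ → ℝ) (z : ℝ) : ℝ :=
  (z ^ 2 * derivWithin (fun y => derivWithin A S y) S z + 6 * (A z - B z) -
    4 * z * (derivWithin A S z - derivWithin B S z)) / z ^ 2

/-- `β(z)` built from `A, B` using derivatives within `S`. -/
noncomputable def mtwBetaW (S : Set ℝ) (A B : ℝ → ℝ) (z : ℝ) : ℝ :=
  (z * derivWithin A S z - 2 * (A z - B z)) / z ^ 2

/-- `γ(z) = B''(z)` using derivatives within `S`. -/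
noncomputable def mtwGammaW (S : Set ℝ) (B : ℝ → ℝ) (z : ℝ) : ℝ :=
  derivWithin (fun y => derivWithin B S y) S z

/-- `δ(z) = B'(z)/z` using the derivative within `S`. -/
noncomputable def mtwDeltaW (S : Set ℝ) (B : ℝ → ℝ) (z : ℝ) : ℝ :=
  derivWithin B S z / z

/-!
Write `p u = u - 4εu³`. Its difference quotients on `[0, b]` are at least `1 - 12εb² > 0`, so the
inverse `h` is Lipschitz, hence continuous, and the inverse function rule gives
`h' = 1 / p'(h) = 1 / (1 - 12εh²)`. Thus `A = 1 - 12εh²` and, away from `0`, `B = 1 - 4εh²`;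
the derivative of a function of `h` is again a function of `h`, so everything is explicit in
`u = h z`. With `s = εu²`, `D = 1 - 12s`, `E = 1 - 4s` one gets `β = -8ε(1 + 12s)/(DE²)`,
`γ = -8ε(1 + 12s)/D³`, `δ = -8ε/(DE)` and
`2√(βγ) - α - δ = ε(32 - 128s + 3072s² - 36864s³)/(D³E²)`, positive for `12s < 1`.
So the inequalities hold for every admissible `ε`, and any `ε₀ < 1/(12b²)` does.
-/

open Set Filter Topology

theorem HasDerivAt.hasDerivWithinAt_of_local_left_inverse {𝕜 : Type*} [NontriviallyNormedField 𝕜]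
    {f g : 𝕜 → 𝕜} {f' a : 𝕜} {s : Set 𝕜} (hg : ContinuousWithinAt g s a)
    (hf : HasDerivAt f f' (g a)) (hf' : f' ≠ 0) (ha : a ∈ s)
    (hfg : ∀ᶠ y in 𝓝[s] a, f (g y) = y) : HasDerivWithinAt g f'⁻¹ s a :=
  ((hf.hasFDerivAt_equiv hf').hasFDerivWithinAt (s := univ)).of_local_left_inverse
    (by rwa [nhdsWithin_univ]) ha hfg

theorem hasDerivAt_one_sub_mul_sq (a t : ℝ) :
    HasDerivAt (fun t => 1 - a * t ^ 2) (-2 * a * t) t :=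
  (((hasDerivAt_pow 2 t).const_mul a).const_sub 1).congr_deriv (by push_cast; ring)

theorem hasDerivAt_div_one_sub_mul_sq {a t : ℝ} (ht : 1 - a * t ^ 2 ≠ 0) :
    HasDerivAt (fun t => t / (1 - a * t ^ 2)) ((1 + a * t ^ 2) / (1 - a * t ^ 2) ^ 2) t :=
  ((hasDerivAt_id t).div (hasDerivAt_one_sub_mul_sq a t) ht).congr_deriv (by simp only [id]; ring)

section SubCubic

variable {ε b : ℝ}

theorem sub_cubic_sub_sub_cubic (u v : ℝ) :
    (u - 4 * ε * u ^ 3) - (v - 4 * ε * v ^ 3) =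
      (u - v) * (1 - 4 * ε * (u ^ 2 + u * v + v ^ 2)) := by
  ring

theorem one_sub_twelve_mul_sq_le (hε : 0 ≤ ε) {u v : ℝ} (hu : u ∈ Icc 0 b) (hv : v ∈ Icc 0 b) :
    1 - 12 * ε * b ^ 2 ≤ 1 - 4 * ε * (u ^ 2 + u * v + v ^ 2) := by
  obtain ⟨hu0, hub⟩ := hu
  obtain ⟨hv0, hvb⟩ := hv
  have : u ^ 2 + u * v + v ^ 2 ≤ 3 * b ^ 2 := by nlinarith
  nlinarith

theorem one_sub_twelve_mul_sq_pos (hε : 0 ≤ ε) (hεb : 12 * ε * b ^ 2 < 1) {u : ℝ}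
    (hu : u ∈ Icc 0 b) : 0 < 1 - 12 * ε * u ^ 2 := by
  linarith [one_sub_twelve_mul_sq_le hε hu hu]

theorem strictMonoOn_sub_cubic (hε : 0 ≤ ε) (hεb : 12 * ε * b ^ 2 < 1) :
    StrictMonoOn (fun u => u - 4 * ε * u ^ 3) (Icc 0 b) := by
  intro u hu v hv huv
  rw [← sub_pos, sub_cubic_sub_sub_cubic]
  exact mul_pos (sub_pos.2 huv) ((sub_pos.2 hεb).trans_le (one_sub_twelve_mul_sq_le hε hv hu))

variable {h : ℝ → ℝ} {S : Set ℝ}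

theorem continuousOn_of_sub_cubic_inverse (hε : 0 ≤ ε) (hεb : 12 * ε * b ^ 2 < 1)
    (hh : ∀ z ∈ S, h z ∈ Icc 0 b ∧ h z - 4 * ε * h z ^ 3 = z) : ContinuousOn h S := by
  have hc : 0 < 1 - 12 * ε * b ^ 2 := by linarith
  refine (LipschitzOnWith.of_dist_le_mul (K := Real.toNNReal (1 - 12 * ε * b ^ 2)⁻¹)
    fun x hx y hy => ?_).continuousOn
  obtain ⟨hxb, hx⟩ := hh x hx
  obtain ⟨hyb, hy⟩ := hh y hy
  have hslope := one_sub_twelve_mul_sq_le hε hxb hyb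
  have hdist : dist x y = dist (h x) (h y) * (1 - 4 * ε * (h x ^ 2 + h x * h y + h y ^ 2)) := by
    have key := sub_cubic_sub_sub_cubic (ε := ε) (h x) (h y)
    rw [hx, hy] at key
    rw [Real.dist_eq, Real.dist_eq, key, abs_mul, abs_of_pos (hc.trans_le hslope)]
  rw [Real.coe_toNNReal _ (inv_nonneg.2 hc.le), hdist, inv_mul_eq_div, le_div_iff₀ hc]
  exact mul_le_mul_of_nonneg_left hslope dist_nonneg

theorem hasDerivWithinAt_of_sub_cubic_inverse (hε : 0 ≤ ε) (hεb : 12 * ε * b ^ 2 < 1)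
    (hh : ∀ z ∈ S, h z ∈ Icc 0 b ∧ h z - 4 * ε * h z ^ 3 = z) {y : ℝ} (hy : y ∈ S) :
    HasDerivWithinAt h (1 - 12 * ε * h y ^ 2)⁻¹ S y := by
  have hp : HasDerivAt (fun u => u - 4 * ε * u ^ 3) (1 - 12 * ε * h y ^ 2) (h y) :=
    ((hasDerivAt_id _).sub ((hasDerivAt_pow 3 _).const_mul (4 * ε))).congr_deriv
      (by push_cast; ring)
  exact hp.hasDerivWithinAt_of_local_left_inverse
    ((continuousOn_of_sub_cubic_inverse hε hεb hh).continuousWithinAt hy)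
    (one_sub_twelve_mul_sq_pos hε hεb (hh y hy).1).ne' hy
    (eventually_nhdsWithin_of_forall fun z hz => (hh z hz).2)

theorem derivWithin_one_sub_mul_sq_comp (hε : 0 ≤ ε) (hεb : 12 * ε * b ^ 2 < 1)
    (hh : ∀ z ∈ S, h z ∈ Icc 0 b ∧ h z - 4 * ε * h z ^ 3 = z) (hS : UniqueDiffOn ℝ S)
    (a : ℝ) {y : ℝ} (hy : y ∈ S) :
    derivWithin (fun x => 1 - a * h x ^ 2) S y = -2 * a * (h y / (1 - 12 * ε * h y ^ 2)) :=
  (((hasDerivAt_one_sub_mul_sq a (h y)).comp_hasDerivWithinAt y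
    (hasDerivWithinAt_of_sub_cubic_inverse hε hεb hh hy)).congr_deriv
      (by rw [div_eq_mul_inv]; ring)).derivWithin (hS y hy)

theorem derivWithin_derivWithin_one_sub_mul_sq_comp (hε : 0 ≤ ε) (hεb : 12 * ε * b ^ 2 < 1)
    (hh : ∀ z ∈ S, h z ∈ Icc 0 b ∧ h z - 4 * ε * h z ^ 3 = z) (hS : UniqueDiffOn ℝ S)
    (a : ℝ) {z : ℝ} (hz : z ∈ S) :
    derivWithin (derivWithin (fun x => 1 - a * h x ^ 2) S) S z =
      -2 * a * ((1 + 12 * ε * h z ^ 2) / (1 - 12 * ε * h z ^ 2) ^ 3) := by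
  have hfirst : derivWithin (fun x => 1 - a * h x ^ 2) S =ᶠ[𝓝[S] z]
      fun y => -2 * a * (h y / (1 - 12 * ε * h y ^ 2)) :=
    eventuallyEq_nhdsWithin_of_eqOn fun y hy => derivWithin_one_sub_mul_sq_comp hε hεb hh hS a hy
  rw [hfirst.derivWithin_eq_of_mem hz]
  have hD := one_sub_twelve_mul_sq_pos hε hεb (hh z hz).1
  refine ((((hasDerivAt_div_one_sub_mul_sq hD.ne').const_mul (-2 * a)).comp_hasDerivWithinAt z
    (hasDerivWithinAt_of_sub_cubic_inverse hε hεb hh hz)).congr_deriv ?_).derivWithin (hS z hz)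
  field_simp

theorem one_div_derivWithin_of_sub_cubic_inverse (hε : 0 ≤ ε) (hεb : 12 * ε * b ^ 2 < 1)
    (hh : ∀ z ∈ S, h z ∈ Icc 0 b ∧ h z - 4 * ε * h z ^ 3 = z) (hS : UniqueDiffOn ℝ S)
    {y : ℝ} (hy : y ∈ S) : 1 / derivWithin h S y = 1 - 12 * ε * h y ^ 2 := by
  rw [(hasDerivWithinAt_of_sub_cubic_inverse hε hεb hh hy).derivWithin (hS y hy), one_div, inv_inv]

theorem pos_of_sub_cubic_inverse (hh : ∀ z ∈ S, h z ∈ Icc 0 b ∧ h z - 4 * ε * h z ^ 3 = z)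
    {y : ℝ} (hy : y ∈ S) (hy0 : 0 < y) : 0 < h y := by
  obtain ⟨⟨hy0', -⟩, hyh⟩ := hh y hy
  refine hy0'.lt_of_ne fun h0 => hy0.ne ?_
  rw [← hyh, ← h0]
  ring

theorem div_sub_cubic_inverse (hh : ∀ z ∈ S, h z ∈ Icc 0 b ∧ h z - 4 * ε * h z ^ 3 = z)
    {y : ℝ} (hy : y ∈ S) (hy0 : 0 < y) : y / h y = 1 - 4 * ε * h y ^ 2 := by
  have hu := (pos_of_sub_cubic_inverse hh hy hy0).ne'
  rw [div_eq_iff hu]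
  linear_combination -(hh y hy).2

end SubCubic

theorem mtw_strict_of_jets {S : Set ℝ} {A B : ℝ → ℝ} {ε u z : ℝ} (hε : 0 < ε) (hu : 0 < u)
    (hεu : 12 * ε * u ^ 2 < 1) (hz : z = u * (1 - 4 * ε * u ^ 2))
    (hA : A z = 1 - 12 * ε * u ^ 2) (hB : B z = 1 - 4 * ε * u ^ 2)
    (hA' : derivWithin A S z = -2 * (12 * ε) * (u / (1 - 12 * ε * u ^ 2)))
    (hB' : derivWithin B S z = -2 * (4 * ε) * (u / (1 - 12 * ε * u ^ 2)))
    (hA'' : derivWithin (derivWithin A S) S z =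
      -2 * (12 * ε) * ((1 + 12 * ε * u ^ 2) / (1 - 12 * ε * u ^ 2) ^ 3))
    (hB'' : derivWithin (derivWithin B S) S z =
      -2 * (4 * ε) * ((1 + 12 * ε * u ^ 2) / (1 - 12 * ε * u ^ 2) ^ 3)) :
    mtwBetaW S A B z < 0 ∧ mtwGammaW S B z < 0 ∧ mtwDeltaW S B z < 0 ∧
      mtwAlphaW S A B z + mtwDeltaW S B z < 2 * √(mtwBetaW S A B z * mtwGammaW S B z) := by
  have hs : 0 < ε * u ^ 2 := by positivity
  set D := 1 - 12 * ε * u ^ 2 with hD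
  set E := 1 - 4 * ε * u ^ 2 with hE
  have hD0 : 0 < D := by linarith
  have hE0 : 0 < E := by linarith
  have hu0 := hu.ne'
  have hDne := hD0.ne'
  have hEne := hE0.ne'
  subst hz
  have hβ : mtwBetaW S A B (u * E) = -8 * ε * (1 + 12 * ε * u ^ 2) / (D * E ^ 2) := by
    rw [mtwBetaW, hA', hA, hB]
    field_simp
    rw [hD, hE]
    ring
  have hγ : mtwGammaW S B (u * E) = -8 * ε * (1 + 12 * ε * u ^ 2) / D ^ 3 := by
    rw [mtwGammaW, hB'']
    ring
  have hδ : mtwDeltaW S B (u * E) = -8 * ε / (D * E) := by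
    rw [mtwDeltaW, hB']
    field_simp
    ring
  have hα : mtwAlphaW S A B (u * E) =
      -24 * ε * (1 + 12 * ε * u ^ 2) / D ^ 3 + ε * (16 + 320 * ε * u ^ 2) / (D * E ^ 2) := by
    rw [mtwAlphaW, hA'', hA', hB', hA, hB]
    field_simp
    rw [hD, hE]
    ring
  have hsqrt : √(mtwBetaW S A B (u * E) * mtwGammaW S B (u * E)) =
      8 * ε * (1 + 12 * ε * u ^ 2) / (D ^ 2 * E) := by
    rw [hβ, hγ, ← Real.sqrt_sq (by positivity : 0 ≤ 8 * ε * (1 + 12 * ε * u ^ 2) / (D ^ 2 * E))]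
    congr 1
    field_simp
  have hgap : 2 * √(mtwBetaW S A B (u * E) * mtwGammaW S B (u * E)) -
      (mtwAlphaW S A B (u * E) + mtwDeltaW S B (u * E)) =
        ε * (32 - 128 * (ε * u ^ 2) + 3072 * (ε * u ^ 2) ^ 2 - 36864 * (ε * u ^ 2) ^ 3) /
          (D ^ 3 * E ^ 2) := by
    rw [hsqrt, hα, hδ]
    field_simp
    rw [hD, hE]
    ring
  have hcubic : 0 < 32 - 128 * (ε * u ^ 2) + 3072 * (ε * u ^ 2) ^ 2 - 36864 * (ε * u ^ 2) ^ 3 := by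
    nlinarith [mul_pos hs hs]
  refine ⟨?_, ?_, ?_, ?_⟩
  · rw [hβ]
    exact div_neg_of_neg_of_pos (by nlinarith) (by positivity)
  · rw [hγ]
    exact div_neg_of_neg_of_pos (by nlinarith) (by positivity)
  · rw [hδ]
    exact div_neg_of_neg_of_pos (by linarith) (by positivity)
  · have : 0 < ε * (32 - 128 * (ε * u ^ 2) + 3072 * (ε * u ^ 2) ^ 2 - 36864 * (ε * u ^ 2) ^ 3) /
        (D ^ 3 * E ^ 2) := by positivity
    linarith

theorem mtw_strict_of_sub_cubic_inverse {ε b : ℝ} {h A B : ℝ → ℝ} {S : Set ℝ} (hε : 0 < ε)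
    (hεb : 12 * ε * b ^ 2 < 1) (hh : ∀ z ∈ S, h z ∈ Icc 0 b ∧ h z - 4 * ε * h z ^ 3 = z)
    (hS : UniqueDiffOn ℝ S) (hA : ∀ y ∈ S, A y = 1 - 12 * ε * h y ^ 2)
    (hB : ∀ y ∈ S, 0 < y → B y = 1 - 4 * ε * h y ^ 2) {z : ℝ} (hz : z ∈ S) (hz0 : 0 < z) :
    mtwBetaW S A B z < 0 ∧ mtwGammaW S B z < 0 ∧ mtwDeltaW S B z < 0 ∧
      mtwAlphaW S A B z + mtwDeltaW S B z < 2 * √(mtwBetaW S A B z * mtwGammaW S B z) := by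
  have hAeq : A =ᶠ[𝓝[S] z] fun y => 1 - 12 * ε * h y ^ 2 := eventuallyEq_nhdsWithin_of_eqOn hA
  have hBeq : B =ᶠ[𝓝[S] z] fun y => 1 - 4 * ε * h y ^ 2 := by
    filter_upwards [self_mem_nhdsWithin, nhdsWithin_le_nhds (lt_mem_nhds hz0)] with y hy hy0
    exact hB y hy hy0
  obtain ⟨hzb, hzh⟩ := hh z hz
  refine mtw_strict_of_jets hε (pos_of_sub_cubic_inverse hh hz hz0)
    (by linarith [one_sub_twelve_mul_sq_pos hε.le hεb hzb]) (by linear_combination -hzh)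
    (hA z hz) (hB z hz hz0) ?_ ?_ ?_ ?_
  · rw [hAeq.derivWithin_eq_of_mem hz]
    exact derivWithin_one_sub_mul_sq_comp hε.le hεb hh hS _ hz
  · rw [hBeq.derivWithin_eq_of_mem hz]
    exact derivWithin_one_sub_mul_sq_comp hε.le hεb hh hS _ hz
  · rw [hAeq.derivWithin.derivWithin_eq_of_mem hz]
    exact derivWithin_derivWithin_one_sub_mul_sq_comp hε.le hεb hh hS _ hz
  · rw [hBeq.derivWithin.derivWithin_eq_of_mem hz]
    exact derivWithin_derivWithin_one_sub_mul_sq_comp hε.le hεb hh hS _ hz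

theorem twelve_mul_mul_sq_lt_one {ε b : ℝ} (hb : 0 < b) (hε : ε < 1 / (12 * b ^ 2)) :
    12 * ε * b ^ 2 < 1 := by
  rw [lt_div_iff₀ (by positivity)] at hε
  linarith

/-- For `l_ε(z) = z²/2 - ε z⁴`, whose derivative is `p_ε(z) = z - 4εz³`:
for `ε ∈ (0, 1/(12b²))` the map `p_ε` is strictly increasing on `[0,b]`, and
there is `ε₀ ∈ (0, 1/(12b²))` such that for every `ε ∈ (0, ε₀)` and every
inverse `h` of `p_ε` between `[0,b]` and `[0, p_ε(b)]`, the quantities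
`α, β, γ, δ` built from `A = 1/h'` and `B(z) = z/h(z)` satisfy the strict
Ma-Trudinger-Wang inequalities on `(0, p_ε(b)]`. -/
theorem stmt_17 (b : ℝ) (hb : 0 < b) :
    (∀ ε ∈ Set.Ioo (0 : ℝ) (1 / (12 * b ^ 2)),
      StrictMonoOn (fun z => z - 4 * ε * z ^ 3) (Set.Icc 0 b)) ∧
    ∃ ε₀ ∈ Set.Ioo (0 : ℝ) (1 / (12 * b ^ 2)), ∀ ε ∈ Set.Ioo (0 : ℝ) ε₀,
      ∀ h : ℝ → ℝ,
        (∀ z ∈ Set.Icc (0 : ℝ) b, h (z - 4 * ε * z ^ 3) = z) →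
        (∀ z ∈ Set.Icc (0 : ℝ) (b - 4 * ε * b ^ 3),
          h z ∈ Set.Icc (0 : ℝ) b ∧ h z - 4 * ε * (h z) ^ 3 = z) →
        let S := Set.Icc (0 : ℝ) (b - 4 * ε * b ^ 3)
        let A : ℝ → ℝ := fun y => 1 / derivWithin h S y
        let B : ℝ → ℝ := fun y => y / h y
        ∀ z ∈ Set.Ioc (0 : ℝ) (b - 4 * ε * b ^ 3),
          mtwBetaW S A B z < 0 ∧ mtwGammaW S B z < 0 ∧ mtwDeltaW S B z < 0 ∧
          mtwAlphaW S A B z + mtwDeltaW S B z <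
            2 * Real.sqrt (mtwBetaW S A B z * mtwGammaW S B z) := by
  have hε₀ : 1 / (24 * b ^ 2) < 1 / (12 * b ^ 2) := by
    gcongr
    linarith [pow_pos hb 2]
  refine ⟨fun ε hε => strictMonoOn_sub_cubic hε.1.le (twelve_mul_mul_sq_lt_one hb hε.2),
    1 / (24 * b ^ 2), ⟨by positivity, hε₀⟩, ?_⟩
  rintro ε ⟨hε, hεε₀⟩ h - hh S A B z hz
  have hεb := twelve_mul_mul_sq_lt_one hb (hεε₀.trans hε₀)
  have hS : UniqueDiffOn ℝ S := uniqueDiffOn_Icc (by nlinarith)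
  exact mtw_strict_of_sub_cubic_inverse hε hεb hh hS
    (fun y hy => one_div_derivWithin_of_sub_cubic_inverse hε.le hεb hh hS hy)
    (fun y hy hy0 => div_sub_cubic_inverse hh hy hy0) (Ioc_subset_Icc_self hz) hz.1
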